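/- For every integer n ≥ 3: w_n(A_{0,j}) = A_{j,n} for all 1 ≤ j ≤ n-1, and w_n(A_{0,n}) = A_{0,n} z_n². -/

import Mathlib

namespace Braids

/-- The braid relations on the generators `σ_1, …, σ_{n-1}` (indexed by `Fin (n-1)`). -/
def braidRels (n : ℕ) : Set (FreeGroup (Fin (n - 1))) :=
  {r | (∃ i j : Fin (n - 1), (i : ℕ) + 1 = (j : ℕ) ∧
          r = .of i * .of j * .of i * (.of j * .of i * .of j)⁻¹) ∨
       (∃ i j : Fin (n - 1), (i : ℕ) + 2 ≤ (j : ℕ) ∧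
          r = .of i * .of j * (.of j * .of i)⁻¹)}

/-- The Artin braid group on `n` strands, presented by generators and the braid relations. -/
abbrev BraidGroup (n : ℕ) := PresentedGroup (braidRels n)

/-- The Artin generator `σ_{i+1}` (0-indexed). -/
def σ {n : ℕ} (i : Fin (n - 1)) : BraidGroup n := PresentedGroup.of i

/-- The transposition `(i, i+1)` associated to the generator `σ`. -/
def swapGen (n : ℕ) (i : Fin (n - 1)) : Equiv.Perm (Fin n) :=
  Equiv.swap ⟨i.1, by have := i.2; omega⟩ ⟨i.1 + 1, by have := i.2; omega⟩

private lemma swap_braid {α : Type*} [DecidableEq α] {a b c : α}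
    (hab : a ≠ b) (hac : a ≠ c) (hbc : b ≠ c) :
    Equiv.swap a b * Equiv.swap b c * Equiv.swap a b =
      Equiv.swap b c * Equiv.swap a b * Equiv.swap b c := by
  have h1 := Equiv.swap_apply_apply (Equiv.swap a b) b c
  rw [Equiv.swap_apply_right, Equiv.swap_apply_of_ne_of_ne hac.symm hbc.symm,
    Equiv.swap_inv] at h1
  have h2 := Equiv.swap_apply_apply (Equiv.swap b c) a b
  rw [Equiv.swap_apply_of_ne_of_ne hab hac, Equiv.swap_apply_left, Equiv.swap_inv] at h2
  rw [← h1, ← h2]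

private lemma swap_commute {α : Type*} [DecidableEq α] {a b c d : α}
    (hca : c ≠ a) (hcb : c ≠ b) (hda : d ≠ a) (hdb : d ≠ b) :
    Equiv.swap a b * Equiv.swap c d = Equiv.swap c d * Equiv.swap a b := by
  have h := Equiv.swap_apply_apply (Equiv.swap a b) c d
  rw [Equiv.swap_apply_of_ne_of_ne hca hcb, Equiv.swap_apply_of_ne_of_ne hda hdb,
    Equiv.swap_inv] at h
  nth_rewrite 1 [h]
  rw [← mul_assoc, ← mul_assoc, Equiv.swap_mul_self, one_mul]

theorem braidRels_hold (n : ℕ) :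
    ∀ r ∈ braidRels n, FreeGroup.lift (swapGen n) r = 1 := by
  rintro r (⟨i, j, hij, rfl⟩ | ⟨i, j, hij, rfl⟩) <;>
    simp only [map_mul, map_inv, FreeGroup.lift_apply_of, mul_inv_eq_one]
  · have hj : swapGen n j =
        Equiv.swap (⟨i.1 + 1, by have := i.2; have := j.2; omega⟩ : Fin n)
          ⟨i.1 + 2, by have := j.2; omega⟩ := by
      unfold swapGen
      congr 1 <;> simp only [Fin.mk.injEq] <;> omega
    rw [hj]
    exact swap_braid (by simp only [ne_eq, Fin.mk.injEq]; omega)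
      (by simp only [ne_eq, Fin.mk.injEq]; omega) (by simp only [ne_eq, Fin.mk.injEq]; omega)
  · exact swap_commute (by simp only [ne_eq, Fin.mk.injEq]; omega)
      (by simp only [ne_eq, Fin.mk.injEq]; omega) (by simp only [ne_eq, Fin.mk.injEq]; omega)
      (by simp only [ne_eq, Fin.mk.injEq]; omega)

/-- The canonical projection from the braid group to the symmetric group,
sending `σ_i` to the transposition `(i, i+1)`. -/
def toPerm (n : ℕ) : BraidGroup n →* Equiv.Perm (Fin n) :=
  PresentedGroup.toGroup (braidRels_hold n)

/-- The pure braid group on `n` strands, as a subgroup of the braid group. -/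
def PureBraid (n : ℕ) : Subgroup (BraidGroup n) := (toPerm n).ker

/-- The pure braid group `P n` as a group. -/
abbrev P (n : ℕ) := ↥(PureBraid n)

/-- The generator `σ_k` (1-indexed, junk value `1` for out-of-range `k`). -/
def sig (n k : ℕ) : BraidGroup n :=
  if h : 1 ≤ k ∧ k ≤ n - 1 then σ ⟨k - 1, by omega⟩ else 1

/-- The conjugating word `σ_{j-1} σ_{j-2} ⋯ σ_{i+1}`. -/
def chain (n i j : ℕ) : BraidGroup n :=
  (((List.range (j - i - 1)).map (fun t => sig n (j - 1 - t))).prod)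

/-- The pure braid generator `A_{i,j} = σ_{j-1} ⋯ σ_{i+1} σ_i² σ_{i+1}⁻¹ ⋯ σ_{j-1}⁻¹`
(for `1 ≤ i < j ≤ n`; junk values otherwise), as an element of the braid group. -/
def Agen (n i j : ℕ) : BraidGroup n := chain n i j * (sig n i) ^ 2 * (chain n i j)⁻¹

theorem toPerm_sig_sq (n k : ℕ) : (toPerm n (sig n k)) ^ 2 = 1 := by
  unfold sig
  split
  · show (toPerm n (PresentedGroup.of _)) ^ 2 = 1
    rw [toPerm, PresentedGroup.toGroup.of]
    simp [swapGen, sq, Equiv.swap_mul_self]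
  · simp

theorem Agen_mem (n i j : ℕ) : Agen n i j ∈ PureBraid n := by
  have : toPerm n (Agen n i j) = 1 := by
    unfold Agen
    rw [map_mul, map_mul, map_inv, map_pow, toPerm_sig_sq, mul_one, mul_inv_cancel]
  exact this

/-- `A_{i,j}` extended symmetrically: `A_{j,i} := A_{i,j}` and `A_{i,i} := 1`. -/
def ASym (n i j : ℕ) : BraidGroup n := if i = j then 1 else Agen n (min i j) (max i j)

theorem ASym_mem (n i j : ℕ) : ASym n i j ∈ PureBraid n := by
  unfold ASym
  split
  · exact one_mem _
  · exact Agen_mem n _ _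

/-- `A_{0,j} := (A_{1,j} A_{2,j} ⋯ A_{n,j})⁻¹`, as an element of the braid group. -/
def A0gen (n j : ℕ) : BraidGroup n :=
  (((List.range n).map (fun t => ASym n (t + 1) j)).prod)⁻¹

theorem A0gen_mem (n j : ℕ) : A0gen n j ∈ PureBraid n := by
  refine inv_mem (list_prod_mem ?_)
  intro x hx
  simp only [List.mem_map] at hx
  obtain ⟨t, -, rfl⟩ := hx
  exact ASym_mem n _ _

/-- The pure braid generator `A_{i,j}` (with the conventions `A_{j,i} = A_{i,j}`, `A_{i,i} = 1`),
as an element of the pure braid group. -/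
def A (n i j : ℕ) : P n := ⟨ASym n i j, ASym_mem n i j⟩

/-- The element `A_{0,j} = (A_{1,j} A_{2,j} ⋯ A_{n,j})⁻¹` of the pure braid group. -/
def A₀ (n j : ℕ) : P n := ⟨A0gen n j, A0gen_mem n j⟩

/-- The full twist `z_n = A_{1,2} (A_{1,3} A_{2,3}) ⋯ (A_{1,n} A_{2,n} ⋯ A_{n-1,n})`. -/
def fullTwist (n : ℕ) : P n :=
  (((List.range (n - 1)).map
    (fun jt => ((List.range (jt + 1)).map (fun it => A n (it + 1) (jt + 2))).prod)).prod)

/-- The reindexing map associated with removing the `k`-th strand. -/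
def phi (k m : ℕ) : ℕ := if m < k then m else m - 1

/-- `d` is the `k`-th strand-removal homomorphism `P n → P (n-1)`: it is determined by
`d (A_{i,j}) = 1` if `k ∈ {i, j}`, and `d (A_{i,j}) = A_{φ(i),φ(j)}` otherwise. -/
def IsStrandRemoval (n k : ℕ) (d : P n →* P (n - 1)) : Prop :=
  ∀ i j : ℕ, 1 ≤ i → i < j → j ≤ n →
    d (A n i j) = if k = i ∨ k = j then 1 else A (n - 1) (phi k i) (phi k j)

/-- The Brunnian subgroup `Brun_n = ∩_{k=1}^n Ker (d_k)`, for a family `d` of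
strand-removal homomorphisms. -/
def Brunnian (n : ℕ) (d : ℕ → (P n →* P (n - 1))) : Subgroup (P n) :=
  ⨅ k ∈ Finset.Icc 1 n, (d k).ker

/-- `θ` is the automorphism `θ_n` of `P n`: it fixes `A_{i,j}` for `2 ≤ i < j ≤ n` and sends
`A_{1,j}` to `A_{1,j}⁻¹ A_{0,j} A_{1,j}`. -/
def IsTheta (n : ℕ) (θ : MulAut (P n)) : Prop :=
  (∀ i j : ℕ, 2 ≤ i → i < j → j ≤ n → θ (A n i j) = A n i j) ∧
  (∀ j : ℕ, 1 < j → j ≤ n → θ (A n 1 j) = (A n 1 j)⁻¹ * A₀ n j * A n 1 j)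

/-- The homomorphism `∂_n := d_1 ∘ θ_n : P n → P (n-1)`. -/
def del (n : ℕ) (d : ℕ → (P n →* P (n - 1))) (θ : MulAut (P n)) : P n →* P (n - 1) :=
  (d 1).comp θ.toMonoidHom

/-- `Z_n := Brun_n ∩ Ker ∂_n`. -/
def Zgrp (n : ℕ) (d : ℕ → (P n →* P (n - 1))) (θ : MulAut (P n)) : Subgroup (P n) :=
  Brunnian n d ⊓ (del n d θ).ker

/-- `Bd_n := ∂_{n+1}(Brun_{n+1})`, built from strand-removal data on `n+1` strands. -/
def Bd (n : ℕ) (D : ℕ → (P (n + 1) →* P n)) (Θ : MulAut (P (n + 1))) : Subgroup (P n) :=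
  Subgroup.map (del (n + 1) D Θ) (Brunnian (n + 1) D)

/-- `w` is the automorphism `w_n` of `P n`: it fixes `A_{i,j}` for `1 ≤ i < j ≤ n-1` and sends
`A_{i,n}` to `A_{i,n} A_{0,i} A_{i,n}⁻¹` for `1 ≤ i ≤ n-1`. -/
def IsW (n : ℕ) (w : MulAut (P n)) : Prop :=
  (∀ i j : ℕ, 1 ≤ i → i < j → j ≤ n - 1 → w (A n i j) = A n i j) ∧
  (∀ i : ℕ, 1 ≤ i → i ≤ n - 1 → w (A n i n) = A n i n * A₀ n i * (A n i n)⁻¹)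

/-! Part (i) is formal: `A_{0,j}⁻¹ = A_{1,j} ⋯ A_{n,j}`, and `w_n` fixes every factor except the
last one, which it conjugates. Part (ii) rests on the identity `A_{0,1} A_{0,2} ⋯ A_{0,n} = z_n⁻²`.
Writing `A_{0,t}⁻¹` as the loop `σ_{t-1} ⋯ σ_1 σ_1 ⋯ σ_{n-1} σ_{n-1} ⋯ σ_t`, it follows by induction
on the number of strands from the centrality of `z_m = Δ_m²` in `B_m`. Applying `w_n` to this
identity and to `z_n = F A_{0,n}⁻¹`, where `F` is fixed by `w_n`, gives `w_n(A_{0,n}) = A_{0,n} u⁻²`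
and `u = z_n u²` for the central element `u = w_n(z_n)`; hence `u = z_n⁻¹`. -/

lemma _root_.List.prod_range_eq_prod_range_pred_mul {M : Type*} [Monoid M] (f : ℕ → M) {k : ℕ}
    (hk : 1 ≤ k) : ((List.range k).map f).prod = ((List.range (k - 1)).map f).prod * f (k - 1) := by
  obtain ⟨k, rfl⟩ : ∃ k', k = k' + 1 := ⟨k - 1, by omega⟩
  exact List.prod_range_succ f k

section Generators

variable {n : ℕ}

lemma σ_braid {i j : Fin (n - 1)} (h : (i : ℕ) + 1 = j) :
    σ i * σ j * σ i = σ j * σ i * σ j :=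
  PresentedGroup.mk_eq_mk_of_mul_inv_mem (Or.inl ⟨i, j, h, rfl⟩)

lemma σ_commute {i j : Fin (n - 1)} (h : (i : ℕ) + 2 ≤ j) : Commute (σ i) (σ j) :=
  PresentedGroup.mk_eq_mk_of_mul_inv_mem (Or.inr ⟨i, j, h, rfl⟩)

lemma sig_eq_σ {k : ℕ} (h₁ : 1 ≤ k) (h₂ : k ≤ n - 1) : sig n k = σ ⟨k - 1, by omega⟩ :=
  dif_pos ⟨h₁, h₂⟩

lemma sig_eq_one {k : ℕ} (h : ¬(1 ≤ k ∧ k ≤ n - 1)) : sig n k = 1 :=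
  dif_neg h

lemma σ_eq_sig (i : Fin (n - 1)) : σ i = sig n (i + 1) := by
  rw [sig_eq_σ (by omega) (by omega)]
  rfl

lemma sig_braid {k : ℕ} (h₁ : 1 ≤ k) (h₂ : k + 1 ≤ n - 1) :
    sig n k * sig n (k + 1) * sig n k = sig n (k + 1) * sig n k * sig n (k + 1) := by
  rw [sig_eq_σ h₁ (by omega), sig_eq_σ (by omega) h₂]
  exact σ_braid (by simp only; omega)

lemma sig_commute {i j : ℕ} (h : i + 2 ≤ j) : Commute (sig n i) (sig n j) := by
  by_cases hi : 1 ≤ i ∧ i ≤ n - 1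
  · by_cases hj : 1 ≤ j ∧ j ≤ n - 1
    · rw [sig_eq_σ hi.1 hi.2, sig_eq_σ hj.1 hj.2]
      exact σ_commute (by simp only; omega)
    · rw [sig_eq_one hj]
      exact Commute.one_right _
  · rw [sig_eq_one hi]
    exact Commute.one_left _

lemma commute_of_forall_commute_sig {z : BraidGroup n}
    (h : ∀ k, 1 ≤ k → k + 1 ≤ n → Commute z (sig n k)) (x : BraidGroup n) : Commute z x := by
  refine (Subgroup.mem_centralizer_singleton_iff.mp
    (PresentedGroup.generated_by _ (Subgroup.centralizer {z}) (fun i => ?_) x)).symm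
  rw [Subgroup.mem_centralizer_singleton_iff]
  exact (σ_eq_sig i ▸ h (i + 1) (by omega) (by omega)).symm

lemma conj_sq_eq_of_braid {G : Type*} [Group G] {a b : G} (h : a * b * a = b * a * b) :
    b * a ^ 2 * b⁻¹ = a⁻¹ * b ^ 2 * a := by
  have hconj : b * a * b⁻¹ = a⁻¹ * b * a :=
    calc b * a * b⁻¹ = a⁻¹ * (a * b * a) * b⁻¹ := by group
      _ = a⁻¹ * (b * a * b) * b⁻¹ := by rw [h]
      _ = a⁻¹ * b * a := by group
  calc b * a ^ 2 * b⁻¹ = (b * a * b⁻¹) ^ 2 := by rw [sq, sq]; group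
    _ = a⁻¹ * b ^ 2 * a := by rw [hconj, sq, sq]; group

end Generators

section Words

variable {n : ℕ}

def ascWord (n a : ℕ) : ℕ → BraidGroup n
  | 0 => 1
  | k + 1 => ascWord n a k * sig n (a + k)

def descWord (n b : ℕ) : ℕ → BraidGroup n
  | 0 => 1
  | k + 1 => descWord n b k * sig n (b - k)

@[simp] lemma ascWord_zero (a : ℕ) : ascWord n a 0 = 1 := rfl

lemma ascWord_succ (a k : ℕ) : ascWord n a (k + 1) = ascWord n a k * sig n (a + k) := rfl

@[simp] lemma descWord_zero (b : ℕ) : descWord n b 0 = 1 := rfl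

lemma descWord_succ (b k : ℕ) : descWord n b (k + 1) = descWord n b k * sig n (b - k) := rfl

lemma descWord_succ' {b k : ℕ} (h : k ≤ b) :
    descWord n (b + 1) (k + 1) = sig n (b + 1) * descWord n b k := by
  induction k with
  | zero => simp [descWord_succ]
  | succ k ih => rw [descWord_succ, ih (by omega), descWord_succ, mul_assoc, Nat.add_sub_add_right]

lemma commute_ascWord {x : BraidGroup n} {a k : ℕ}
    (h : ∀ t < k, Commute x (sig n (a + t))) : Commute x (ascWord n a k) := by
  induction k with
  | zero => exact Commute.one_right _
  | succ k ih => exact (ih fun t ht => h t (by omega)).mul_right (h k (by omega))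

lemma commute_descWord {x : BraidGroup n} {b k : ℕ}
    (h : ∀ t < k, Commute x (sig n (b - t))) : Commute x (descWord n b k) := by
  induction k with
  | zero => exact Commute.one_right _
  | succ k ih => exact (ih fun t ht => h t (by omega)).mul_right (h k (by omega))

lemma ascWord_mul_sig {a k i : ℕ} (ha : 1 ≤ a) (hk : a + k ≤ n) (hai : a ≤ i)
    (hik : i + 2 ≤ a + k) : ascWord n a k * sig n i = sig n (i + 1) * ascWord n a k := by
  induction k with
  | zero => omega
  | succ k ih =>
    rcases Nat.lt_or_ge (i + 2) (a + k + 1) with hlt | hge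
    · rw [ascWord_succ, mul_assoc, (sig_commute (by omega : i + 2 ≤ a + k)).symm.eq,
        ← mul_assoc, ih (by omega) (by omega), mul_assoc]
    · obtain ⟨k, rfl⟩ : ∃ k', k = k' + 1 := ⟨k - 1, by omega⟩
      obtain rfl : i = a + k := by omega
      have hcomm : Commute (ascWord n a k) (sig n (a + k + 1)) :=
        commute_ascWord (fun t _ => (sig_commute (by omega)).symm) |>.symm
      have hbraid := sig_braid (n := n) (k := a + k) (by omega) (by omega)
      simp only [ascWord_succ, ← Nat.add_assoc, mul_assoc] at hbraid ⊢
      rw [hbraid, ← mul_assoc, hcomm.eq, mul_assoc]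

lemma descWord_mul_sig {b k i : ℕ} (hb : b + 1 ≤ n) (hkb : k ≤ b) (hib : i ≤ b)
    (hik : b + 2 ≤ i + k) : descWord n b k * sig n i = sig n (i - 1) * descWord n b k := by
  induction k with
  | zero => omega
  | succ k ih =>
    rcases Nat.lt_or_ge (b + 2) (i + k + 1) with hlt | hge
    · rw [descWord_succ, mul_assoc, (sig_commute (by omega : b - k + 2 ≤ i)).eq,
        ← mul_assoc, ih (by omega) (by omega), mul_assoc]
    · obtain ⟨k, rfl⟩ : ∃ k', k = k' + 1 := ⟨k - 1, by omega⟩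
      obtain ⟨j, rfl⟩ : ∃ j, i = j + 1 := ⟨i - 1, by omega⟩
      have hcomm : Commute (descWord n b k) (sig n j) :=
        commute_descWord (fun t _ => sig_commute (by omega)) |>.symm
      have hbraid := sig_braid (n := n) (k := j) (by omega) (by omega)
      rw [descWord_succ, descWord_succ, show b - k = j + 1 by omega,
        show b - (k + 1) = j by omega, Nat.add_sub_cancel]
      simp only [mul_assoc] at hbraid ⊢
      rw [← hbraid, ← mul_assoc, hcomm.eq, mul_assoc]

end Words

section HalfTwist

variable {n : ℕ}

/-- Garside's half twist `Δ_m = σ_1 (σ_2 σ_1) ⋯ (σ_{m-1} ⋯ σ_1)` on the first `m` strands. -/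
def halfTwist (n : ℕ) : ℕ → BraidGroup n
  | 0 => 1
  | m + 1 => halfTwist n m * descWord n m m

lemma halfTwist_succ (m : ℕ) : halfTwist n (m + 1) = halfTwist n m * descWord n m m := rfl

lemma commute_halfTwist {x : BraidGroup n} {m : ℕ}
    (h : ∀ i, 1 ≤ i → i + 1 ≤ m → Commute x (sig n i)) : Commute x (halfTwist n m) := by
  induction m with
  | zero => exact Commute.one_right x
  | succ m ih =>
    exact (ih fun i h₁ h₂ => h i h₁ (by omega)).mul_right
      (commute_descWord fun t ht => h (m - t) (by omega) (by omega))

lemma halfTwist_succ' (m : ℕ) : halfTwist n (m + 1) = ascWord n 1 m * halfTwist n m := by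
  induction m with
  | zero => rfl
  | succ m ih =>
    have hcomm : Commute (sig n (m + 1)) (halfTwist n m) :=
      commute_halfTwist fun i _ hi => (sig_commute (by omega)).symm
    rw [halfTwist_succ m, halfTwist_succ (m + 1), ih, descWord_succ' le_rfl, ascWord_succ,
      Nat.add_comm 1 m]
    simp only [mul_assoc]
    rw [← mul_assoc (halfTwist n m), ← hcomm.eq, mul_assoc]

lemma halfTwist_two : halfTwist n 2 = sig n 1 := by
  rw [halfTwist_succ', ascWord_succ]
  simp [halfTwist]

lemma halfTwist_mul_sig {m i : ℕ} (hm : m ≤ n) (hi : 1 ≤ i) (him : i + 1 ≤ m) :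
    halfTwist n m * sig n i = sig n (m - i) * halfTwist n m := by
  induction m generalizing i with
  | zero => omega
  | succ m ih =>
    rcases Nat.lt_or_ge i 2 with hi1 | hi2
    · obtain rfl : i = 1 := by omega
      rcases Nat.lt_or_ge m 2 with hm1 | hm2
      · obtain rfl : m = 1 := by omega
        rw [halfTwist_two]
      · have hshift : ascWord n 1 m * sig n (m - 1) = sig n m * ascWord n 1 m := by
          simpa [Nat.sub_add_cancel (by omega : 1 ≤ m)] using
            ascWord_mul_sig (n := n) (a := 1) (k := m) (i := m - 1) le_rfl (by omega)
              (by omega) (by omega)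
        rw [halfTwist_succ', mul_assoc, ih (by omega) le_rfl (by omega), ← mul_assoc, hshift,
          mul_assoc, Nat.add_sub_cancel]
    · have hshift : descWord n m m * sig n i = sig n (i - 1) * descWord n m m :=
        descWord_mul_sig (by omega) le_rfl (by omega) (by omega)
      rw [halfTwist_succ, mul_assoc, hshift, ← mul_assoc, ih (by omega) (by omega) (by omega),
        show m - (i - 1) = m + 1 - i by omega, mul_assoc]

lemma halfTwist_mul_ascWord {m k : ℕ} (hm : m ≤ n) (hk : k + 1 ≤ m) :
    halfTwist n m * ascWord n 1 k = descWord n (m - 1) k * halfTwist n m := by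
  induction k with
  | zero => simp
  | succ k ih =>
    rw [ascWord_succ, ← mul_assoc, ih (by omega), mul_assoc,
      halfTwist_mul_sig hm (by omega) (by omega), descWord_succ,
      show m - 1 - k = m - (1 + k) by omega, mul_assoc]

end HalfTwist

section Agen

variable {n : ℕ}

lemma descWord_eq_prod (b k : ℕ) :
    descWord n b k = ((List.range k).map fun t => sig n (b - t)).prod := by
  induction k with
  | zero => rfl
  | succ k ih => rw [List.prod_range_succ, ← ih, descWord_succ]

lemma Agen_eq (i j : ℕ) :
    Agen n i j = descWord n (j - 1) (j - i - 1) * sig n i ^ 2 *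
      (descWord n (j - 1) (j - i - 1))⁻¹ := by
  rw [Agen, chain, descWord_eq_prod]

lemma Agen_eq' {i j : ℕ} (hi : 1 ≤ i) (hij : i < j) (hj : j ≤ n) :
    Agen n i j = (descWord n (j - 2) (j - i - 1))⁻¹ * sig n (j - 1) ^ 2 *
      descWord n (j - 2) (j - i - 1) := by
  obtain ⟨d, rfl⟩ : ∃ d, j = i + 1 + d := ⟨j - i - 1, by omega⟩
  induction d with
  | zero => simp [Agen_eq]
  | succ d ih =>
    have hfirst : descWord n (i + d) (d + 1) = sig n (i + d) * descWord n (i + d - 1) d := by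
      simpa [show i + d - 1 + 1 = i + d by omega] using
        descWord_succ' (n := n) (b := i + d - 1) (k := d) (by omega)
    have hcomm : Commute (sig n (i + d + 1)) (descWord n (i + d - 1) d) :=
      commute_descWord fun t _ => (sig_commute (by omega)).symm
    have hbraid := conj_sq_eq_of_braid (sig_braid (n := n) (k := i + d) (by omega) (by omega))
    calc Agen n i (i + 1 + (d + 1))
        = sig n (i + d + 1) * Agen n i (i + 1 + d) * (sig n (i + d + 1))⁻¹ := by
          rw [Agen_eq, Agen_eq, show i + 1 + (d + 1) - 1 = i + d + 1 by omega,
            show i + 1 + (d + 1) - i - 1 = d + 1 by omega, descWord_succ' (by omega),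
            show i + 1 + d - 1 = i + d by omega, show i + 1 + d - i - 1 = d by omega]
          group
      _ = (descWord n (i + d - 1) d)⁻¹ *
            (sig n (i + d + 1) * sig n (i + d) ^ 2 * (sig n (i + d + 1))⁻¹) *
            descWord n (i + d - 1) d := by
          rw [ih (by omega) (by omega), show i + 1 + d - 2 = i + d - 1 by omega,
            show i + 1 + d - i - 1 = d by omega, show i + 1 + d - 1 = i + d by omega]
          simp only [mul_assoc]
          rw [hcomm.symm.inv_right.eq, ← mul_assoc (sig n (i + d + 1)), hcomm.inv_right.eq]
          simp only [mul_assoc]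
      _ = _ := by
          rw [hbraid, show i + 1 + (d + 1) - 2 = i + d by omega,
            show i + 1 + (d + 1) - i - 1 = d + 1 by omega,
            show i + 1 + (d + 1) - 1 = i + d + 1 by omega, hfirst]
          group

end Agen

section FullTwist

variable {n : ℕ}

def upProd (n m p : ℕ) : ℕ → BraidGroup n
  | 0 => 1
  | l + 1 => upProd n m p l * Agen n (p + l) m

def twist (n : ℕ) : ℕ → BraidGroup n
  | 0 => 1
  | m + 1 => twist n m * upProd n (m + 1) 1 m

lemma upProd_succ (m p l : ℕ) : upProd n m p (l + 1) = upProd n m p l * Agen n (p + l) m := rfl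

lemma upProd_succ' (m p l : ℕ) : upProd n m p (l + 1) = Agen n p m * upProd n m (p + 1) l := by
  induction l with
  | zero => simp [upProd]
  | succ l ih => rw [upProd_succ, ih, upProd_succ, mul_assoc, Nat.add_right_comm, Nat.add_assoc]

lemma twist_succ (m : ℕ) : twist n (m + 1) = twist n m * upProd n (m + 1) 1 m := rfl

lemma commute_upProd {x : BraidGroup n} {m p l : ℕ}
    (h : ∀ i, p ≤ i → i < p + l → Commute x (Agen n i m)) : Commute x (upProd n m p l) := by
  induction l with
  | zero => exact Commute.one_right x
  | succ l ih => exact (ih fun i h₁ h₂ => h i h₁ (by omega)).mul_right (h _ le_self_add (by omega))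

lemma upProd_one_eq {m k : ℕ} (hk : k + 1 ≤ m) :
    upProd n m 1 k = descWord n (m - 1) (m - 1) * ascWord n 1 k *
      (descWord n (m - 1) (m - k - 1))⁻¹ := by
  induction k with
  | zero => simp [upProd]
  | succ k ih =>
    have hlast : descWord n (m - 1) (m - k - 1) =
        descWord n (m - 1) (m - (k + 1) - 1) * sig n (k + 1) := by
      rw [show m - k - 1 = m - (k + 1) - 1 + 1 by omega, descWord_succ,
        show m - 1 - (m - (k + 1) - 1) = k + 1 by omega]
    rw [upProd_succ, ih (by omega), Agen_eq, hlast, ascWord_succ, Nat.add_comm 1 k]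
    group

lemma upProd_succ_one_eq (m : ℕ) :
    upProd n (m + 1) 1 m = descWord n m m * ascWord n 1 m := by
  simp [upProd_one_eq]

lemma twist_eq_halfTwist_sq {m : ℕ} (hm : m ≤ n) : twist n m = halfTwist n m ^ 2 := by
  induction m with
  | zero => simp [twist, halfTwist]
  | succ m ih =>
    rw [twist_succ, ih (by omega), upProd_succ_one_eq, sq, sq]
    calc halfTwist n m * halfTwist n m * (descWord n m m * ascWord n 1 m)
        = halfTwist n m * (halfTwist n (m + 1) * ascWord n 1 m) := by
          rw [halfTwist_succ]; group
      _ = halfTwist n m * (descWord n m m * halfTwist n (m + 1)) := by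
          rw [halfTwist_mul_ascWord hm (by omega), Nat.add_sub_cancel]
      _ = halfTwist n (m + 1) * halfTwist n (m + 1) := by
          rw [halfTwist_succ]; group

/-- Conjugation by `Δ_m` maps `σ_i` to `σ_{m-i}`, so `z_m = Δ_m²` commutes with `σ_i`. -/
lemma sig_commute_twist {i m : ℕ} (hi : 1 ≤ i) (him : i + 1 ≤ m) (hm : m ≤ n) :
    Commute (sig n i) (twist n m) := by
  have h₁ := halfTwist_mul_sig (n := n) hm hi him
  have h₂ := halfTwist_mul_sig (n := n) hm (i := m - i) (by omega) (by omega)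
  rw [show m - (m - i) = i by omega] at h₂
  rw [twist_eq_halfTwist_sq hm, Commute, SemiconjBy, sq, ← mul_assoc, ← h₂, mul_assoc, ← h₁,
    mul_assoc]

end FullTwist

section Loops

variable {n : ℕ}

/-- `σ_{t-1} ⋯ σ_1 σ_1 ⋯ σ_{m-1} σ_{m-1} ⋯ σ_t`: strand `t` encircling the other strands among
the first `m`; for `m = n` this is `A_{0,t}⁻¹`. -/
def loop (n m t : ℕ) : BraidGroup n :=
  descWord n (t - 1) (t - 1) * ascWord n 1 (m - 1) * descWord n (m - 1) (m - t)

def loopProd (n m : ℕ) : ℕ → BraidGroup n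
  | 0 => 1
  | k + 1 => loop n m (k + 1) * loopProd n m k

lemma loopProd_succ (m k : ℕ) : loopProd n m (k + 1) = loop n m (k + 1) * loopProd n m k := rfl

lemma sig_commute_loop {m t k : ℕ} (ht : 1 ≤ t) (htk : t + 1 ≤ k) (hkm : k + 1 ≤ m)
    (hm : m ≤ n) : Commute (sig n k) (loop n m t) := by
  have hleft : Commute (sig n k) (descWord n (t - 1) (t - 1)) :=
    commute_descWord fun u _ => (sig_commute (by omega)).symm
  have hasc : sig n k * ascWord n 1 (m - 1) = ascWord n 1 (m - 1) * sig n (k - 1) := by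
    simpa [Nat.sub_add_cancel (by omega : 1 ≤ k)] using
      (ascWord_mul_sig (n := n) (a := 1) (k := m - 1) (i := k - 1) le_rfl (by omega) (by omega)
        (by omega)).symm
  have hdesc : sig n (k - 1) * descWord n (m - 1) (m - t) = descWord n (m - 1) (m - t) * sig n k :=
    (descWord_mul_sig (by omega) (by omega) (by omega) (by omega)).symm
  rw [Commute, SemiconjBy, loop, ← mul_assoc, ← mul_assoc, hleft.eq, mul_assoc _ (sig n k), hasc,
    ← mul_assoc, mul_assoc _ (sig n (k - 1)), hdesc, ← mul_assoc]

lemma loop_eq_mul_Agen {m t : ℕ} (ht : 1 ≤ t) (htm : t + 1 ≤ m) (hm : m ≤ n) :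
    loop n m t = loop n (m - 1) t * Agen n t m := by
  obtain ⟨m, rfl⟩ : ∃ m', m = m' + 2 := ⟨m - 2, by omega⟩
  rw [Agen_eq' ht (by omega) hm, loop, loop, show m + 2 - 1 = m + 1 by omega,
    show m + 2 - 2 = m by omega, show m + 1 - 1 = m by omega,
    show m + 2 - t = m + 1 - t + 1 by omega, descWord_succ' (by omega), ascWord_succ, Nat.add_sub_cancel, Nat.add_comm 1 m, sq]
  group

lemma commute_Agen {x : BraidGroup n} {s m : ℕ}
    (h : ∀ i, s ≤ i → i + 1 ≤ m → Commute x (sig n i)) (hsm : s + 1 ≤ m) :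
    Commute x (Agen n s m) := by
  have hdesc : Commute x (descWord n (m - 1) (m - s - 1)) :=
    commute_descWord fun u _ => h (m - 1 - u) (by omega) (by omega)
  rw [Agen_eq]
  exact (hdesc.mul_right ((h s le_rfl hsm).pow_right 2)).mul_right hdesc.inv_right

lemma loop_commute_Agen {t s m : ℕ} (ht : 1 ≤ t) (hts : t + 1 ≤ s) (hsm : s + 1 ≤ m)
    (hm : m ≤ n) : Commute (loop n m t) (Agen n s m) :=
  commute_Agen (fun _ hi him => (sig_commute_loop ht (by omega) him hm).symm) hsm

lemma upProd_conj_Agen_mul_loopProd {m : ℕ} (hm : m ≤ n) {k : ℕ} (hkm : k + 1 ≤ m) :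
    ∀ j l, k = j + l + 1 →
      upProd n m (j + 1) l * Agen n k m * (upProd n m (j + 1) l)⁻¹ * loopProd n (m - 1) j =
        loopProd n (m - 1) j * (upProd n m 1 (j + l) * Agen n k m * (upProd n m 1 (j + l))⁻¹) := by
  intro j
  induction j with
  | zero => simp [loopProd]
  | succ j ih =>
    intro l hk
    set Y := upProd n m (j + 1 + 1) l * Agen n k m * (upProd n m (j + 1 + 1) l)⁻¹ with hY
    have hcomm : Commute (loop n m (j + 1)) Y := by
      have hU : Commute (loop n m (j + 1)) (upProd n m (j + 1 + 1) l) :=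
        commute_upProd fun i _ _ => loop_commute_Agen (by omega) (by omega) (by omega) hm
      exact (hU.mul_right (loop_commute_Agen (by omega) (by omega) (by omega) hm)).mul_right
        hU.inv_right
    rw [loop_eq_mul_Agen (by omega) (by omega) hm] at hcomm
    have hpass : Y * loop n (m - 1) (j + 1) = loop n (m - 1) (j + 1) *
        (upProd n m (j + 1) (l + 1) * Agen n k m * (upProd n m (j + 1) (l + 1))⁻¹) := by
      calc Y * loop n (m - 1) (j + 1)
          = Y * (loop n (m - 1) (j + 1) * Agen n (j + 1) m) * (Agen n (j + 1) m)⁻¹ := by group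
        _ = loop n (m - 1) (j + 1) * Agen n (j + 1) m * Y * (Agen n (j + 1) m)⁻¹ := by
          rw [← hcomm.eq]
        _ = _ := by rw [upProd_succ', hY]; group
    calc Y * loopProd n (m - 1) (j + 1)
        = loop n (m - 1) (j + 1) *
            (upProd n m (j + 1) (l + 1) * Agen n k m * (upProd n m (j + 1) (l + 1))⁻¹ *
              loopProd n (m - 1) j) := by
          rw [loopProd_succ, ← mul_assoc, hpass, mul_assoc]
      _ = loopProd n (m - 1) (j + 1) *
            (upProd n m 1 (j + 1 + l) * Agen n k m * (upProd n m 1 (j + 1 + l))⁻¹) := by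
          rw [ih (l + 1) (by omega), loopProd_succ, Nat.add_right_comm j 1 l, ← Nat.add_assoc]
          simp only [mul_assoc]

lemma loopProd_eq_mul_upProd {m k : ℕ} (hm : m ≤ n) (hkm : k + 1 ≤ m) :
    loopProd n m k = loopProd n (m - 1) k * upProd n m 1 k := by
  induction k with
  | zero => simp [loopProd, upProd]
  | succ k ih =>
    have hpass := upProd_conj_Agen_mul_loopProd hm hkm k 0 rfl
    simp only [upProd, one_mul, inv_one, mul_one, Nat.add_zero] at hpass
    calc loopProd n m (k + 1)
        = loop n (m - 1) (k + 1) * (Agen n (k + 1) m * loopProd n (m - 1) k) * upProd n m 1 k := by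
          rw [loopProd_succ, loop_eq_mul_Agen (by omega) hkm hm, ih (by omega)]
          group
      _ = loopProd n (m - 1) (k + 1) * upProd n m 1 (k + 1) := by
          rw [hpass, loopProd_succ, upProd_succ, Nat.add_comm 1 k]
          group

lemma loopProd_self_eq_twist_sq {m : ℕ} (hm : m ≤ n) : loopProd n m m = twist n m ^ 2 := by
  induction m with
  | zero => simp [loopProd, twist]
  | succ m ih =>
    set U := upProd n (m + 1) 1 m
    have htwist : Commute (twist n m) (twist n (m + 1)) := by
      rw [twist_eq_halfTwist_sq (m := m) (by omega)]
      exact ((commute_halfTwist fun i hi him =>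
        (sig_commute_twist hi (by omega) hm).symm).pow_right 2).symm
    have hU : Commute (twist n m) U := by
      rw [show U = (twist n m)⁻¹ * twist n (m + 1) by rw [twist_succ, inv_mul_cancel_left]]
      exact (Commute.refl _).inv_right.mul_right htwist
    have hloop : loop n (m + 1) (m + 1) = U := by
      simp [loop, U, upProd_succ_one_eq]
    calc loopProd n (m + 1) (m + 1)
        = U * (twist n m ^ 2 * U) := by
          rw [loopProd_succ, loopProd_eq_mul_upProd hm le_rfl, Nat.add_sub_cancel, ih (by omega),
            hloop]
      _ = twist n m * U * (twist n m * U) := by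
          rw [sq, ← mul_assoc, ← (hU.mul_left hU).eq, mul_assoc (twist n m) U, ← mul_assoc U,
            ← hU.eq]
          simp only [mul_assoc]
      _ = twist n (m + 1) ^ 2 := by rw [twist_succ, sq]

end Loops

section PureBraid

variable {n : ℕ}

lemma ASym_of_lt {i j : ℕ} (h : i < j) : ASym n i j = Agen n i j := by
  rw [ASym, if_neg h.ne, min_eq_left h.le, max_eq_right h.le]

lemma ASym_of_gt {i j : ℕ} (h : j < i) : ASym n i j = Agen n j i := by
  rw [ASym, if_neg h.ne', min_eq_right h.le, max_eq_left h.le]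

lemma A_self (i : ℕ) : A n i i = 1 := Subtype.ext (if_pos rfl)

lemma A_comm (i j : ℕ) : A n i j = A n j i := by
  refine Subtype.ext ?_
  show ASym n i j = ASym n j i
  rw [ASym, ASym, min_comm, max_comm]
  simp only [eq_comm]

lemma prod_ASym_eq_upProd {j k : ℕ} (hk : k < j) :
    ((List.range k).map fun t => ASym n (t + 1) j).prod = upProd n j 1 k := by
  induction k with
  | zero => rfl
  | succ k ih => rw [List.prod_range_succ, ih (by omega), ASym_of_lt hk, upProd_succ, Nat.add_comm]

lemma prod_ASym_eq_loop {j m : ℕ} (hj : 1 ≤ j) (hjm : j ≤ m) (hm : m ≤ n) :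
    ((List.range m).map fun t => ASym n (t + 1) j).prod = loop n m j := by
  induction m, hjm using Nat.le_induction with
  | base =>
    obtain ⟨j, rfl⟩ : ∃ j', j = j' + 1 := ⟨j - 1, by omega⟩
    rw [List.prod_range_succ, prod_ASym_eq_upProd (by omega), ASym, if_pos rfl, mul_one,
      upProd_succ_one_eq]
    simp [loop]
  | succ m hjm ih =>
    rw [List.prod_range_succ, ih (by omega), ASym_of_gt (by omega),
      loop_eq_mul_Agen hj (by omega) hm, Nat.add_sub_cancel]

lemma coe_A₀ {j : ℕ} (hj : 1 ≤ j) (hjn : j ≤ n) : (A₀ n j : BraidGroup n) = (loop n n j)⁻¹ := by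
  show A0gen n j = _
  rw [A0gen, prod_ASym_eq_loop hj hjn le_rfl]

lemma prod_inv_loop (m k : ℕ) :
    ((List.range k).map fun t => (loop n m (t + 1))⁻¹).prod = (loopProd n m k)⁻¹ := by
  induction k with
  | zero => simp [loopProd]
  | succ k ih => rw [List.prod_range_succ, ih, loopProd_succ, mul_inv_rev]

lemma coe_fullTwist (hn : 1 ≤ n) : (fullTwist n : BraidGroup n) = twist n n := by
  have hblock (k : ℕ) : ((List.range k).map fun t =>
      ((List.range (t + 1)).map fun s => (A n (s + 1) (t + 2) : BraidGroup n)).prod).prod =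
      twist n (k + 1) := by
    induction k with
    | zero => rfl
    | succ k ih =>
      rw [List.prod_range_succ, ih, twist_succ]
      exact congrArg _ (prod_ASym_eq_upProd (by omega))
  rw [fullTwist]
  simpa [Nat.sub_add_cancel hn, Function.comp_def] using hblock (n - 1)

lemma A₀_eq_inv_prod (j : ℕ) : A₀ n j = (((List.range n).map fun t => A n (t + 1) j).prod)⁻¹ := by
  refine Subtype.ext ?_
  simp [A₀, A0gen, A, Function.comp_def]

lemma prod_A_mul_A_eq_inv_A₀ (hn : 1 ≤ n) (j : ℕ) :
    ((List.range (n - 1)).map fun t => A n (t + 1) j).prod * A n n j = (A₀ n j)⁻¹ := by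
  rw [A₀_eq_inv_prod, inv_inv, List.prod_range_eq_prod_range_pred_mul _ hn, Nat.sub_add_cancel hn]

lemma prod_A_eq_inv_A₀_self (hn : 1 ≤ n) :
    ((List.range (n - 1)).map fun t => A n (t + 1) n).prod = (A₀ n n)⁻¹ := by
  rw [← prod_A_mul_A_eq_inv_A₀ hn, A_self, mul_one]

lemma prod_A₀_eq_inv_fullTwist_sq (hn : 1 ≤ n) :
    ((List.range n).map fun t => A₀ n (t + 1)).prod = (fullTwist n ^ 2)⁻¹ := by
  refine Subtype.ext ?_
  have hloops : ((List.range n).map fun t => (A₀ n (t + 1) : BraidGroup n)) =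
      (List.range n).map fun t => (loop n n (t + 1))⁻¹ :=
    List.map_congr_left fun t ht => coe_A₀ (by omega) (by simp at ht; omega)
  simp only [SubmonoidClass.coe_list_prod, List.map_map, Function.comp_def, hloops,
    prod_inv_loop, InvMemClass.coe_inv, SubmonoidClass.coe_pow, coe_fullTwist hn,
    loopProd_self_eq_twist_sq le_rfl]

lemma fullTwist_commute (hn : 1 ≤ n) (x : P n) : Commute (fullTwist n) x := by
  refine Subtype.ext ?_
  show (fullTwist n : BraidGroup n) * x = x * fullTwist n
  rw [coe_fullTwist hn]
  exact commute_of_forall_commute_sig (fun k hk hkn => (sig_commute_twist hk hkn le_rfl).symm) x.1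

end PureBraid

namespace IsW

variable {n : ℕ} {w : MulAut (P n)}

lemma apply_A_of_le (hw : IsW n w) {i j : ℕ} (hi : 1 ≤ i) (hj : 1 ≤ j) (hin : i ≤ n - 1)
    (hjn : j ≤ n - 1) : w (A n i j) = A n i j := by
  rcases lt_trichotomy i j with h | rfl | h
  · exact hw.1 i j hi h hjn
  · rw [A_self, map_one]
  · rw [A_comm, hw.1 j i hj h hin]

lemma apply_prod_A (hw : IsW n w) {j k : ℕ} (hj : 1 ≤ j) (hjn : j ≤ n - 1) (hk : k ≤ n - 1) :
    w ((List.range k).map fun t => A n (t + 1) j).prod =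
      ((List.range k).map fun t => A n (t + 1) j).prod := by
  rw [map_list_prod, List.map_map]
  exact congrArg _ (List.map_congr_left fun t ht =>
    hw.apply_A_of_le (by omega) hj (by simp at ht; omega) hjn)

lemma apply_A₀_of_le (hw : IsW n w) {j : ℕ} (hj : 1 ≤ j) (hjn : j ≤ n - 1) :
    w (A₀ n j) = A n j n := by
  have hsplit := prod_A_mul_A_eq_inv_A₀ (n := n) (by omega) j
  rw [A_comm (n := n) n j] at hsplit
  apply inv_injective
  calc (w (A₀ n j))⁻¹
      = ((List.range (n - 1)).map fun t => A n (t + 1) j).prod * w (A n j n) := by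
        rw [← map_inv, ← hsplit, map_mul, hw.apply_prod_A hj hjn le_rfl]
    _ = (A n j n)⁻¹ := by
        rw [hw.2 j hj hjn, eq_mul_inv_of_mul_eq hsplit]
        group

lemma apply_fullTwist (hw : IsW n w) (hn : 2 ≤ n) :
    w (fullTwist n) = fullTwist n * A₀ n n * (w (A₀ n n))⁻¹ := by
  set F := ((List.range (n - 2)).map fun t =>
    ((List.range (t + 1)).map fun s => A n (s + 1) (t + 2)).prod).prod
  have hsplit : fullTwist n = F * (A₀ n n)⁻¹ := by
    rw [fullTwist, List.prod_range_eq_prod_range_pred_mul _ (by omega),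
      show n - 1 - 1 = n - 2 by omega, show n - 2 + 1 = n - 1 by omega,
      show n - 2 + 2 = n by omega, prod_A_eq_inv_A₀_self (by omega)]
  have hfix : w F = F := by
    rw [map_list_prod, List.map_map]
    exact congrArg _ (List.map_congr_left fun t ht =>
      hw.apply_prod_A (by omega) (by simp at ht; omega) (by simp at ht; omega))
  rw [hsplit, map_mul, hfix, map_inv, inv_mul_cancel_right]

lemma apply_A₀_self (hw : IsW n w) (hn : 1 ≤ n) :
    w (A₀ n n) = A₀ n n * (w (fullTwist n) ^ 2)⁻¹ := by
  have hprod := congrArg w (prod_A₀_eq_inv_fullTwist_sq hn)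
  have hlow : (List.range (n - 1)).map (w ∘ fun t => A₀ n (t + 1)) =
      (List.range (n - 1)).map fun t => A n (t + 1) n :=
    List.map_congr_left fun t ht => hw.apply_A₀_of_le (by omega) (by simp at ht; omega)
  rw [map_list_prod, List.map_map, List.prod_range_eq_prod_range_pred_mul _ hn, hlow,
    prod_A_eq_inv_A₀_self hn, Function.comp_apply, Nat.sub_add_cancel hn, map_inv,
    map_pow] at hprod
  rw [← hprod, mul_inv_cancel_left]

end IsW

/-- For `n ≥ 3`: `w_n (A_{0,j}) = A_{j,n}` for `1 ≤ j ≤ n-1`, and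
`w_n (A_{0,n}) = A_{0,n} z_n²`. -/
theorem w_apply_A0 (n : ℕ) (hn : 3 ≤ n) (w : MulAut (P n)) (hw : IsW n w) :
    (∀ j : ℕ, 1 ≤ j → j ≤ n - 1 → w (A₀ n j) = A n j n) ∧
      w (A₀ n n) = A₀ n n * (fullTwist n) ^ 2 := by
  refine ⟨fun j hj hjn => hw.apply_A₀_of_le hj hjn, ?_⟩
  set z := fullTwist n
  set a := A₀ n n
  have hcentral (x : P n) : Commute (w z) x := by
    simpa using (fullTwist_commute (by omega) (w.symm x)).map w
  have hwa : w a = a * (w z ^ 2)⁻¹ := hw.apply_A₀_self (by omega)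
  have hwz_eq : w z = z * w z ^ 2 :=
    calc w z = z * a * (a * (w z ^ 2)⁻¹)⁻¹ := by rw [← hwa]; exact hw.apply_fullTwist (by omega)
      _ = z * (a * w z ^ 2 * a⁻¹) := by group
      _ = z * w z ^ 2 := by rw [← ((hcentral a).pow_left 2).eq, mul_inv_cancel_right]
  have hwz : w z = z⁻¹ := by
    refine eq_inv_of_mul_eq_one_right ?_
    calc z * w z = z * w z ^ 2 * (w z)⁻¹ := by group
      _ = 1 := by rw [← hwz_eq, mul_inv_cancel]
  rw [hwa, hwz]
  group

end Braids
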